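/- arXiv:0912.5279 — 4 statements merged into one kernel-verified Lean document; each statement's English description precedes it below -/
import Mathlib

section
/- If p ≡ 3 (mod 4) is prime and m is an integer with m ≢ 0 (mod p), then the elliptic curve E: y² = x³ - mx over F_p has exactly p + 1 points (including the point at infinity). -/
/-!
The curve is nonsingular, so its points are `∞` together with the affine solutions, and the
solutions of `y² = a` number `χ(a) + 1` for the quadratic character `χ`. Hence the affine count is
`p + ∑ₓ χ(x³ - m x)`. The polynomial `x³ - m x` is odd and, as `p ≡ 3 (mod 4)`, `χ(-1) = -1`, so
`x ↦ -x` turns the character sum into its own negative: it vanishes.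
-/

/-- The elliptic curve `y² = x³ - m·x` over `ZMod p`. -/
def Emx (p : ℕ) (m : ℤ) : WeierstrassCurve.Affine (ZMod p) :=
  { a₁ := 0, a₂ := 0, a₃ := 0, a₄ := -(m : ZMod p), a₆ := 0 }

open Finset

lemma WeierstrassCurve.Affine.natCard_point {R : Type*} [CommRing R] [Nontrivial R] [Finite R]
    (W : WeierstrassCurve.Affine R) [W.IsElliptic] :
    Nat.card W.Point = Nat.card {xy : R × R // W.Equation xy.1 xy.2} + 1 :=
  (Nat.card_congr W.pointEquiv).trans Finite.card_option

section QuadraticChar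

variable {F : Type*} [Field F] [Fintype F] [DecidableEq F]

lemma natCard_sqrts (hF : ringChar F ≠ 2) (a : F) :
    (Nat.card {y : F // y ^ 2 = a} : ℤ) = quadraticChar F a + 1 := by
  rw [← quadraticChar_card_sqrts hF a, Set.toFinset_card, Nat.card_eq_fintype_card]
  rfl

lemma natCard_solutions_sq_eq_apply (hF : ringChar F ≠ 2) (f : F → F) :
    (Nat.card {xy : F × F // xy.2 ^ 2 = f xy.1} : ℤ) =
      Fintype.card F + ∑ x, quadraticChar F (f x) := by
  rw [Nat.card_congr (Equiv.subtypeProdEquivSigmaSubtype fun x y => y ^ 2 = f x),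
    Nat.card_sigma]
  push_cast
  simp only [natCard_sqrts hF, sum_add_distrib, sum_const, card_univ]
  simp [add_comm]

lemma sum_quadraticChar_eq_zero_of_odd (hF : ¬IsSquare (-1 : F)) {f : F → F}
    (hf : ∀ x, f (-x) = -f x) : ∑ x, quadraticChar F (f x) = 0 := by
  have hχ : quadraticChar F (-1) = -1 := quadraticChar_neg_one_iff_not_isSquare.mpr hF
  have h : ∑ x, quadraticChar F (f x) = -∑ x, quadraticChar F (f x) :=
    calc ∑ x, quadraticChar F (f x) = ∑ x, quadraticChar F (f (-x)) :=
          (Fintype.sum_equiv (Equiv.neg F) _ _ fun x => by simp).symm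
      _ = -∑ x, quadraticChar F (f x) := by
          rw [← sum_neg_distrib]
          refine sum_congr rfl fun x _ => ?_
          rw [hf, neg_eq_neg_one_mul, map_mul, hχ, neg_one_mul]
  omega

end QuadraticChar

section Emx

variable {p : ℕ} {m : ℤ}

lemma Emx_Δ : (Emx p m).Δ = 2 ^ 6 * (m : ZMod p) ^ 3 := by
  simp only [WeierstrassCurve.Δ, WeierstrassCurve.b₂, WeierstrassCurve.b₄,
    WeierstrassCurve.b₆, WeierstrassCurve.b₈, Emx]
  ring

lemma Emx_equation_iff {x y : ZMod p} :
    (Emx p m).Equation x y ↔ y ^ 2 = x ^ 3 - (m : ZMod p) * x := by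
  rw [WeierstrassCurve.Affine.equation_iff]
  simp only [Emx]
  ring_nf

lemma Emx_isElliptic [Fact p.Prime] (h2 : (2 : ZMod p) ≠ 0) (hm : (m : ZMod p) ≠ 0) :
    (Emx p m).IsElliptic := by
  rw [WeierstrassCurve.isElliptic_iff, Emx_Δ]
  exact (mul_ne_zero (pow_ne_zero _ h2) (pow_ne_zero _ hm)).isUnit

end Emx

/-- If `p ≡ 3 (mod 4)` is prime and `m ≢ 0 (mod p)`, then the curve
`y² = x³ - m·x` over `F_p` has exactly `p + 1` points (including `∞`). -/
theorem stmt_0 (p : ℕ) [Fact p.Prime] (hp4 : p % 4 = 3)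
    (m : ℤ) (hm : (m : ZMod p) ≠ 0) :
    Nat.card (Emx p m).Point = p + 1 := by
  classical
  have hchar : ringChar (ZMod p) ≠ 2 := by rw [ZMod.ringChar_zmod_n]; omega
  have := Emx_isElliptic (Ring.two_ne_zero hchar) hm
  have hodd : ∑ x : ZMod p, quadraticChar (ZMod p) (x ^ 3 - (m : ZMod p) * x) = 0 :=
    sum_quadraticChar_eq_zero_of_odd (by rw [ZMod.exists_sq_eq_neg_one_iff]; omega)
      fun x => by ring
  have haff : Nat.card {xy : ZMod p × ZMod p // (Emx p m).Equation xy.1 xy.2} = p := by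
    rw [Nat.card_congr (Equiv.subtypeEquivRight fun xy => Emx_equation_iff)]
    have h := natCard_solutions_sq_eq_apply hchar fun x => x ^ 3 - (m : ZMod p) * x
    rw [hodd, ZMod.card, add_zero] at h
    exact_mod_cast h
  rw [WeierstrassCurve.Affine.natCard_point, haff]
end

section
/- Let p ≡ 3 (mod 4) be prime with p + 1 = 2^k·n, k ≥ 2, n odd, m a quadratic non-residue mod p, and E: y² = x³ - mx. If Q = (x, y) ∈ E(F_p) has x a quadratic non-residue mod p, then the order of Q in E(F_p) is divisible by 2^k. -/
section PowerTorsion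

variable {G G' : Type*}

lemma exists_pow_eq_of_pow_eq_pow_of_coprime [CommGroup G] {n s : ℕ} (hs : s.Coprime n)
    {g h : G} (hgh : h ^ n = g ^ s) : ∃ r : G, r ^ n = g := by
  obtain ⟨u, v, huv⟩ := Nat.Coprime.isCoprime hs
  have hgh' : h ^ (n : ℤ) = g ^ (s : ℤ) := by simpa only [zpow_natCast] using hgh
  refine ⟨h ^ u * g ^ v, ?_⟩
  rw [← zpow_natCast, mul_zpow, ← zpow_mul, ← zpow_mul, mul_comm u, zpow_mul, hgh', ← zpow_mul,
    ← zpow_add, mul_comm (s : ℤ), huv, zpow_one]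

lemma Subgroup.card_le_card_ker_mul_card_map [Group G] [Group G'] [Finite G] (f : G →* G')
    (H : Subgroup G) : Nat.card H ≤ Nat.card f.ker * Nat.card (H.map f) := by
  let g := f.comp H.subtype
  have hker : Nat.card g.ker ≤ Nat.card f.ker :=
    Nat.card_le_card_of_injective (fun x => (⟨x.1.1, x.2⟩ : f.ker)) fun _ _ hxy =>
      Subtype.val_injective (Subtype.val_injective (congrArg (fun z : f.ker => (z : G)) hxy))
  rw [← H.range_subtype, ← MonoidHom.range_comp, H.range_subtype, ← g.ker.card_mul_index,
    Subgroup.index_ker]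
  exact Nat.mul_le_mul_right _ hker

variable [CommGroup G]

lemma map_ker_powMonoidHom_mul_le (a b : ℕ) :
    (powMonoidHom (a * b) : G →* G).ker.map (powMonoidHom a) ≤ (powMonoidHom b).ker := by
  rintro _ ⟨x, hx, rfl⟩
  simpa [← pow_mul] using hx

variable [Finite G]

lemma card_ker_powMonoidHom_pow_le {p : ℕ} (hp : Nat.card (powMonoidHom p : G →* G).ker ≤ p)
    (j : ℕ) : Nat.card (powMonoidHom (p ^ j) : G →* G).ker ≤ p ^ j := by
  induction j with
  | zero => simp [powMonoidHom]
  | succ j ih =>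
    calc Nat.card (powMonoidHom (p ^ (j + 1)) : G →* G).ker
        ≤ Nat.card (powMonoidHom p : G →* G).ker *
            Nat.card (powMonoidHom (p ^ j) : G →* G).ker := by
          rw [pow_succ']
          exact (Subgroup.card_le_card_ker_mul_card_map _ _).trans
            (Nat.mul_le_mul_left _ (Subgroup.card_le_of_le (map_ker_powMonoidHom_mul_le _ _)))
      _ ≤ p * p ^ j := Nat.mul_le_mul hp ih
      _ = p ^ (j + 1) := (pow_succ' p j).symm

variable {p : ℕ} [Fact p.Prime]

lemma exists_pow_eq_of_pow_pow_eq_one (hp : Nat.card (powMonoidHom p : G →* G).ker ≤ p) {k : ℕ}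
    (hk : p ^ (k + 1) ∣ Nat.card G) {g : G} (hg : g ^ p ^ k = 1) : ∃ r : G, r ^ p = g := by
  set K := (powMonoidHom (p * p ^ k) : G →* G).ker
  obtain ⟨S, hS⟩ := Sylow.exists_subgroup_card_pow_prime p hk
  have hSK : S ≤ K := fun x hx => by
    have := congrArg Subtype.val (pow_card_eq_one' (x := (⟨x, hx⟩ : S)))
    simpa [K, ← pow_succ', hS] using this
  have hmap : K.map (powMonoidHom p) = (powMonoidHom (p ^ k)).ker := by
    refine Subgroup.eq_of_le_of_card_ge (map_ker_powMonoidHom_mul_le _ _) ?_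
    refine Nat.le_of_mul_le_mul_left ?_ (Fact.out : p.Prime).pos
    calc p * Nat.card (powMonoidHom (p ^ k) : G →* G).ker
        ≤ p * p ^ k := Nat.mul_le_mul_left _ (card_ker_powMonoidHom_pow_le hp k)
      _ = Nat.card S := by rw [hS, pow_succ']
      _ ≤ Nat.card (powMonoidHom p : G →* G).ker * Nat.card (K.map (powMonoidHom p)) :=
        (Subgroup.card_le_of_le hSK).trans (K.card_le_card_ker_mul_card_map _)
      _ ≤ p * Nat.card (K.map (powMonoidHom p)) := Nat.mul_le_mul_right _ hp
  obtain ⟨r, -, hr⟩ := (hmap ▸ hg : g ∈ K.map (powMonoidHom p))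
  exact ⟨r, hr⟩

theorem pow_dvd_orderOf_of_forall_pow_ne (hp : Nat.card (powMonoidHom p : G →* G).ker ≤ p)
    {k : ℕ} (hk : p ^ k ∣ Nat.card G) {g : G} (hg : ∀ r : G, r ^ p ≠ g) : p ^ k ∣ orderOf g := by
  obtain _ | k := k
  · simp
  by_contra hdvd
  have hpp : p.Prime := Fact.out
  set d := orderOf g
  have hd : d ≠ 0 := (orderOf_pos g).ne'
  have hv : d.factorization p ≤ k := by
    by_contra! hv
    exact hdvd ((hpp.pow_dvd_iff_le_factorization hd).2 hv)
  set s := d / p ^ d.factorization p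
  have hgs : (g ^ s) ^ p ^ k = 1 := by
    rw [← pow_mul, ← orderOf_dvd_iff_pow_eq_one]
    calc d = p ^ d.factorization p * s := (Nat.ordProj_mul_ordCompl_eq_self d p).symm
      _ ∣ p ^ k * s := Nat.mul_dvd_mul_right (Nat.pow_dvd_pow p hv) s
      _ = s * p ^ k := mul_comm _ _
  obtain ⟨r, hr⟩ := exists_pow_eq_of_pow_pow_eq_one hp hk hgs
  obtain ⟨t, ht⟩ := exists_pow_eq_of_pow_eq_pow_of_coprime (Nat.coprime_ordCompl hpp hd).symm hr
  exact hg t ht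

end PowerTorsion

theorem pow_dvd_addOrderOf_of_forall_nsmul_ne {A : Type*} [AddCommGroup A] [Finite A] {p : ℕ}
    [Fact p.Prime] (hp : Nat.card (nsmulAddMonoidHom p : A →+ A).ker ≤ p) {k : ℕ}
    (hk : p ^ k ∣ Nat.card A) {a : A} (ha : ∀ b : A, p • b ≠ a) : p ^ k ∣ addOrderOf a :=
  pow_dvd_orderOf_of_forall_pow_ne (G := Multiplicative A) hp hk ha

namespace FiniteField

variable {F : Type*} [Field F] [Fintype F]

lemma sum_quadraticChar_eq_zero_of_odd [DecidableEq F] (hF : Fintype.card F % 4 = 3) {f : F → F}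
    (hf : ∀ x, f (-x) = -f x) : ∑ x, quadraticChar F (f x) = 0 := by
  have hχ : quadraticChar F (-1) = -1 :=
    quadraticChar_neg_one_iff_not_isSquare.2 (by rw [isSquare_neg_one_iff]; omega)
  have hneg : ∑ x, quadraticChar F (f x) = -∑ x, quadraticChar F (f x) := by
    calc ∑ x, quadraticChar F (f x) = ∑ x, quadraticChar F (f (-x)) :=
          (Equiv.sum_comp (Equiv.neg F) fun x => quadraticChar F (f x)).symm
      _ = -∑ x, quadraticChar F (f x) := by
          rw [← Finset.sum_neg_distrib]
          refine Finset.sum_congr rfl fun x _ => ?_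
          rw [hf, neg_eq_neg_one_mul, map_mul, hχ, neg_one_mul]
  omega

lemma card_sq_eq_of_odd (hF : Fintype.card F % 4 = 3) {f : F → F} (hf : ∀ x, f (-x) = -f x) :
    Nat.card {xy : F × F // xy.2 ^ 2 = f xy.1} = Fintype.card F := by
  classical
  have hchar : ringChar F ≠ 2 := by rw [Ne, even_card_iff_char_two]; omega
  have hfiber (a : F) : (Nat.card {y : F // y ^ 2 = a} : ℤ) = quadraticChar F a + 1 := by
    rw [← quadraticChar_card_sqrts hchar a, ← Nat.card_eq_card_toFinset]
    rfl
  zify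
  rw [Nat.card_congr (Equiv.subtypeProdEquivSigmaSubtype fun x y => y ^ 2 = f x), Nat.card_sigma]
  push_cast
  simp only [hfiber, Finset.sum_add_distrib, sum_quadraticChar_eq_zero_of_odd hF hf]
  simp

end FiniteField

open WeierstrassCurve.Affine

def WeierstrassCurve.Affine.Point.equivOption {R : Type*} [CommRing R]
    (W : WeierstrassCurve.Affine R) :
    W.Point ≃ Option {xy : R × R // W.Nonsingular xy.1 xy.2} where
  toFun
    | .zero => none
    | .some x y h => Option.some ⟨(x, y), h⟩
  invFun
    | none => .zero
    | Option.some ⟨(x, y), h⟩ => .some x y h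
  left_inv P := by cases P <;> rfl
  right_inv o := by rcases o with _ | ⟨⟨x, y⟩, h⟩ <;> rfl

namespace Emx

variable {p : ℕ} {m : ℤ}

lemma equation_iff {x y : ZMod p} : (Emx p m).Equation x y ↔ y ^ 2 = x ^ 3 - m * x := by
  rw [WeierstrassCurve.Affine.equation_iff]
  simp only [Emx]
  ring_nf

lemma Δ_eq : (Emx p m).Δ = 64 * (m : ZMod p) ^ 3 := by
  simp only [WeierstrassCurve.Δ, WeierstrassCurve.b₂, WeierstrassCurve.b₄, WeierstrassCurve.b₆,
    WeierstrassCurve.b₈, Emx]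
  ring

lemma negY_eq (x y : ZMod p) : (Emx p m).negY x y = -y := by
  simp [negY, Emx]

lemma nonsingular_zero_zero (hm : (m : ZMod p) ≠ 0) : (Emx p m).Nonsingular 0 0 :=
  nonsingular_zero.2 ⟨rfl, .inr (neg_ne_zero.2 hm)⟩

variable [Fact p.Prime]

lemma nonsingular_iff (hp : ringChar (ZMod p) ≠ 2) (hm : (m : ZMod p) ≠ 0) {x y : ZMod p} :
    (Emx p m).Nonsingular x y ↔ y ^ 2 = x ^ 3 - m * x := by
  rw [← equation_iff_nonsingular_of_Δ_ne_zero, equation_iff]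
  rw [Δ_eq, show (64 : ZMod p) = 2 ^ 6 by norm_num]
  exact mul_ne_zero (pow_ne_zero _ (Ring.two_ne_zero hp)) (pow_ne_zero _ hm)

lemma card_point (hp : p % 4 = 3) (hm : (m : ZMod p) ≠ 0) :
    Nat.card (Emx p m).Point = p + 1 := by
  have hchar : ringChar (ZMod p) ≠ 2 := by rw [ZMod.ringChar_zmod_n]; omega
  have hodd : ∀ x : ZMod p, (-x) ^ 3 - m * -x = -(x ^ 3 - m * x) := fun x => by ring
  rw [Nat.card_congr ((Point.equivOption _).trans (Equiv.optionCongr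
    (Equiv.subtypeEquivRight fun xy => nonsingular_iff hchar hm))),
    Nat.card_eq_fintype_card, Fintype.card_option, ← Nat.card_eq_fintype_card,
    FiniteField.card_sq_eq_of_odd (f := fun x : ZMod p => x ^ 3 - m * x) (by rwa [ZMod.card]) hodd,
    ZMod.card]

lemma eq_zero_of_add_self_eq_zero (hp : ringChar (ZMod p) ≠ 2) (hm : ¬IsSquare (m : ZMod p))
    {x y : ZMod p} {h : (Emx p m).Nonsingular x y} (hP : Point.some x y h + .some x y h = 0) :
    x = 0 ∧ y = 0 := by
  by_cases hy : y = (Emx p m).negY x y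
  · rw [negY_eq] at hy
    have hy0 : y = 0 :=
      (mul_eq_zero.1 (by linear_combination hy : 2 * y = 0)).resolve_left (Ring.two_ne_zero hp)
    have hcurve := equation_iff.1 h.1
    rw [hy0] at hcurve
    refine ⟨?_, hy0⟩
    refine (mul_eq_zero.1 (by linear_combination -hcurve : x * (x ^ 2 - m) = 0)).resolve_right ?_
    exact fun hx => hm ⟨x, by linear_combination -hx⟩
  · rw [Point.add_self_of_Y_ne hy] at hP
    exact absurd hP (Point.some_ne_zero _)

lemma card_ker_two_nsmul_le (hp : ringChar (ZMod p) ≠ 2) (hm : ¬IsSquare (m : ZMod p)) :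
    Nat.card (nsmulAddMonoidHom 2 : (Emx p m).Point →+ (Emx p m).Point).ker ≤ 2 := by
  have hm0 : (m : ZMod p) ≠ 0 := fun h => hm (h ▸ IsSquare.zero)
  have hsub : ∀ P ∈ (nsmulAddMonoidHom 2 : (Emx p m).Point →+ (Emx p m).Point).ker,
      P ∈ ({0, .some 0 0 (nonsingular_zero_zero hm0)} : Set (Emx p m).Point) := by
    rintro (_ | ⟨x, y, h⟩) hP
    · exact Or.inl rfl
    · obtain ⟨rfl, rfl⟩ := eq_zero_of_add_self_eq_zero hp hm (by simpa [two_nsmul] using hP)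
      exact Or.inr rfl
  rw [← SetLike.coe_sort_coe, Nat.card_coe_set_eq]
  exact (Set.ncard_le_ncard hsub).trans ((Set.ncard_insert_le _ _).trans (by simp))

lemma isSquare_of_add_self_eq_some (hp : ringChar (ZMod p) ≠ 2) {x y : ZMod p}
    {h : (Emx p m).Nonsingular x y} {R : (Emx p m).Point} (hR : R + R = .some x y h) :
    IsSquare x := by
  rcases R with _ | ⟨x₁, y₁, h₁⟩
  · exact absurd hR.symm (Point.some_ne_zero h)
  by_cases hy : y₁ = (Emx p m).negY x₁ y₁
  · rw [Point.add_self_of_Y_eq hy] at hR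
    exact absurd hR.symm (Point.some_ne_zero h)
  rw [Point.add_self_of_Y_ne hy, Point.some.injEq] at hR
  obtain ⟨rfl, -⟩ := hR
  have hy₁ : y₁ ≠ 0 := fun h0 => hy (by rw [negY_eq, h0, neg_zero])
  have h2 := Ring.two_ne_zero hp
  have hcurve := equation_iff.1 h₁.1
  refine ⟨(x₁ ^ 2 + m) / (2 * y₁), ?_⟩
  rw [slope_of_Y_ne rfl hy, negY_eq, sub_neg_eq_add, ← two_mul]
  simp only [addX, Emx]
  field_simp
  linear_combination (-8 * x₁) * hcurve

end Emx

theorem stmt_4_general (p : ℕ) [Fact p.Prime] (hp4 : p % 4 = 3)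
    (k n : ℕ) (hpn : p + 1 = 2 ^ k * n)
    (m : ℤ) (hm : ¬ IsSquare (m : ZMod p))
    (x y : ZMod p) (h : (Emx p m).Nonsingular x y) (hx : ¬ IsSquare x) :
    2 ^ k ∣ addOrderOf (WeierstrassCurve.Affine.Point.some x y h) := by
  have hp : ringChar (ZMod p) ≠ 2 := by rw [ZMod.ringChar_zmod_n]; omega
  have hm0 : (m : ZMod p) ≠ 0 := fun h0 => hm (h0 ▸ IsSquare.zero)
  have : Finite (Emx p m).Point := Finite.of_equiv _ (Point.equivOption _).symm
  refine pow_dvd_addOrderOf_of_forall_nsmul_ne (Emx.card_ker_two_nsmul_le hp hm) ?_ ?_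
  · rw [Emx.card_point hp4 hm0, hpn]
    exact dvd_mul_right _ _
  · exact fun R hR => hx (Emx.isSquare_of_add_self_eq_some hp (by rwa [← two_nsmul]))

/-- If `p ≡ 3 (mod 4)` is prime with `p + 1 = 2^k·n`, `k ≥ 2`, `n` odd, `m` a
quadratic non-residue mod `p`, and `Q = (x, y) ∈ E(F_p)` has `x` a quadratic
non-residue mod `p`, then the order of `Q` is divisible by `2^k`. -/
theorem stmt_4 (p : ℕ) [Fact p.Prime] (hp4 : p % 4 = 3)
    (k n : ℕ) (hk : 2 ≤ k) (hn : Odd n) (hpn : p + 1 = 2 ^ k * n)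
    (m : ℤ) (hm0 : (m : ZMod p) ≠ 0) (hm : ¬ IsSquare (m : ZMod p))
    (x y : ZMod p) (h : (Emx p m).Nonsingular x y) (hx : ¬ IsSquare x) :
    2 ^ k ∣ addOrderOf (WeierstrassCurve.Affine.Point.some x y h) :=
  stmt_4_general p hp4 k n hpn m hm x y h hx
end

section
/- Let p = 2^k·n − 1 be composite with k ≥ 2, n odd, n ≤ √p / λ for some λ > 1, and λ√p > (p^{1/4} + 1)². Then there is no elliptic curve E: y² = x³ − mx over Z/p (with gcd(m,p)=1) and point Q on E such that 2^i·Q is defined with denominator coprime to p for i = 1,...,k−1 and 2^k·Q = ∞ modulo p. Equivalently, if such a point exists, p is prime. -/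
/-!
Since `p ≡ 3 (mod 4)`, it has a prime factor `r ≡ 3 (mod 4)`. Over `𝔽_r` the curve
`y² = x³ - m x` has exactly `r + 1` points: `-1` is a nonsquare and `x³ - m x` is odd, so the
quadratic character sum vanishes. The doubling chain shows that the reduction of `Q` has order
exactly `2^k`, hence `2^k ∣ r + 1`. If `p = r s` with `s ≥ 2`, then `s ≡ 1 (mod 2^k)`, so
`p + 1 ≥ 4^k` and `n ≥ 2^k`; but `n ≤ √p / λ < √p` gives `2^k n ≤ n² < p + 1`.
-/

theorem Nat.exists_prime_dvd_mod_four_eq_three {N : ℕ} (hN : N % 4 = 3) :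
    ∃ r, r.Prime ∧ r ∣ N ∧ r % 4 = 3 := by
  by_contra! H
  have hN0 : N ≠ 0 := by omega
  have hfactor : ∀ q ∈ (N.primeFactorsList.map (Nat.cast : ℕ → ZMod 4)), q = 1 := by
    simp only [List.mem_map]
    rintro _ ⟨q, hq, rfl⟩
    have hqp := Nat.prime_of_mem_primeFactorsList hq
    have hqN := Nat.dvd_of_mem_primeFactorsList hq
    have hq2 : q % 2 = 1 := hqp.eq_two_or_odd.resolve_left (by rintro rfl; omega)
    have := H q hqp hqN
    rw [← ZMod.natCast_mod, show q % 4 = 1 by omega, Nat.cast_one]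
  have h := congrArg (Nat.cast : ℕ → ZMod 4) (Nat.prod_primeFactorsList hN0)
  rw [Nat.cast_list_prod, List.prod_eq_one hfactor, ← ZMod.natCast_mod, hN] at h
  exact absurd h (by decide)

theorem Nat.le_of_mul_add_one_eq_mul {r s d n : ℕ} (h : r * s + 1 = d * n) (hd : d ∣ r + 1)
    (hs : 2 ≤ s) : d ≤ n := by
  obtain ⟨t, ht⟩ := hd
  have hd0 : 0 < d := Nat.pos_of_ne_zero (by rintro rfl; omega)
  have ht1 : 1 ≤ t := Nat.pos_of_ne_zero (by rintro rfl; omega)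
  zify at h ht hs hd0 ht1 ⊢
  -- `r ≡ -1` and `r s ≡ -1` modulo `d` force `s ≡ 1`, and `s ≠ 1`.
  have hds : (d : ℤ) ∣ s - 1 := ⟨t * s - n, by linear_combination (s : ℤ) * ht - h⟩
  have hsd : (d : ℤ) + 1 ≤ s := by linarith [Int.le_of_dvd (by omega) hds]
  have hdn : (d : ℤ) * d ≤ d * n := by nlinarith
  exact le_of_mul_le_mul_left hdn hd0

theorem FiniteField.ringChar_ne_two_of_card_mod_four {F : Type*} [Field F] [Finite F]
    (hF : Nat.card F % 4 = 3) : ringChar F ≠ 2 := by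
  have := Fintype.ofFinite F
  rw [Nat.card_eq_fintype_card] at hF
  exact fun h => by have := FiniteField.even_card_iff_char_two.mp h; omega

open Finset in
theorem FiniteField.card_sq_eq_of_odd_s7 {F : Type*} [Field F] [Finite F]
    (hF : Nat.card F % 4 = 3) (f : F → F) (hf : ∀ x, f (-x) = -f x) :
    Nat.card {P : F × F // P.2 ^ 2 = f P.1} = Nat.card F := by
  classical
  have hchar := FiniteField.ringChar_ne_two_of_card_mod_four hF
  have := Fintype.ofFinite F
  rw [Nat.card_eq_fintype_card] at hF ⊢
  have hfiber (x : F) :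
      (Fintype.card {y : F // y ^ 2 = f x} : ℤ) = quadraticChar F (f x) + 1 := by
    rw [← quadraticChar_card_sqrts hchar, Set.toFinset_card]; rfl
  -- `-1` is a nonsquare, so the substitution `x ↦ -x` negates the character sum.
  have hsum : ∑ x : F, quadraticChar F (f x) = 0 := by
    have hneg := Equiv.sum_comp (Equiv.neg F) (fun x => quadraticChar F (f x))
    have hodd (x : F) : quadraticChar F (f (-x)) = -quadraticChar F (f x) := by
      rw [hf, neg_eq_neg_one_mul, map_mul, quadraticChar_neg_one hchar,
        ZMod.χ₄_nat_three_mod_four hF, neg_one_mul]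
    simp only [Equiv.neg_apply, hodd, sum_neg_distrib] at hneg
    linarith
  rw [Nat.card_eq_fintype_card, Fintype.card_congr (Equiv.subtypeProdEquivSigmaSubtype
    fun x y => y ^ 2 = f x), Fintype.card_sigma, ← Nat.cast_inj (R := ℤ)]
  push_cast
  rw [sum_congr rfl fun x _ => hfiber x, sum_add_distrib, hsum]
  simp

theorem ZMod.intCast_ne_zero_of_gcd_eq_one {S : ℤ} {p r : ℕ} (hr : r ≠ 1) (hrp : r ∣ p)
    (h : Int.gcd S p = 1) : (S : ZMod r) ≠ 0 := by
  rw [Ne, ZMod.intCast_zmod_eq_zero_iff_dvd]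
  intro hS
  have := Int.dvd_coe_gcd hS (Int.natCast_dvd_natCast.mpr hrp)
  rw [h] at this
  exact hr (Nat.dvd_one.mp (by exact_mod_cast this))

open WeierstrassCurve.Affine

namespace WeierstrassCurve

def ofA₄ {R : Type*} [CommRing R] (a : R) : WeierstrassCurve R :=
  { a₁ := 0, a₂ := 0, a₃ := 0, a₄ := a, a₆ := 0 }

namespace ofA₄

variable {F : Type*} [Field F] {a x y : F}

lemma equation_iff : (ofA₄ a).toAffine.Equation x y ↔ y ^ 2 = x ^ 3 + a * x := by
  rw [Affine.equation_iff]
  simp only [ofA₄]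
  constructor <;> intro h <;> linear_combination h

lemma Δ_eq : (ofA₄ a).Δ = -64 * a ^ 3 := by
  simp only [Δ, b₂, b₄, b₆, b₈, ofA₄]
  ring

lemma nonsingular_iff (h2 : (2 : F) ≠ 0) (ha : a ≠ 0) :
    (ofA₄ a).toAffine.Nonsingular x y ↔ y ^ 2 = x ^ 3 + a * x := by
  rw [← equation_iff_nonsingular_of_Δ_ne_zero, equation_iff]
  rw [toAffine, Δ_eq, show (-64 : F) = -2 ^ 6 by norm_num]
  exact mul_ne_zero (neg_ne_zero.mpr (pow_ne_zero _ h2)) (pow_ne_zero _ ha)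

lemma negY_eq : (ofA₄ a).toAffine.negY x y = -y := by
  simp [negY, ofA₄]

lemma card_point [Finite F] (hF : Nat.card F % 4 = 3) (ha : a ≠ 0) :
    Nat.card (ofA₄ a).toAffine.Point = Nat.card F + 1 := by
  have h2 : (2 : F) ≠ 0 := Ring.two_ne_zero (FiniteField.ringChar_ne_two_of_card_mod_four hF)
  have e : (ofA₄ a).toAffine.Point ≃ Option {P : F × F // P.2 ^ 2 = P.1 ^ 3 + a * P.1} :=
    (Equiv.subtypeUnivEquiv fun _ => trivial).symm.trans <|
      (nonsingularPointEquivSubtype trivial).trans <| Equiv.optionCongr <|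
        Equiv.subtypeEquivRight fun _ => by simp [nonsingular_iff h2 ha]
  rw [Nat.card_congr e, Finite.card_option,
    FiniteField.card_sq_eq_of_odd_s7 hF (fun x => x ^ 3 + a * x) fun x => by ring]

variable [DecidableEq F]

lemma some_add_self_of_Y_eq_zero (h : (ofA₄ a).toAffine.Nonsingular x 0) :
    Point.some _ _ h + Point.some _ _ h = 0 :=
  Point.add_self_of_Y_eq (by rw [negY_eq, neg_zero])

lemma exists_some_add_self (h2 : (2 : F) ≠ 0) (h : (ofA₄ a).toAffine.Nonsingular x y)
    (hy : y ≠ 0) {x' : F} (hx' : 4 * (x ^ 3 + a * x) * x' = (x ^ 2 - a) ^ 2) :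
    ∃ (y' : F) (h' : (ofA₄ a).toAffine.Nonsingular x' y'),
      Point.some _ _ h + Point.some _ _ h = Point.some _ _ h' := by
  have heq : y ^ 2 = x ^ 3 + a * x := equation_iff.mp h.1
  have hne : y ≠ (ofA₄ a).toAffine.negY x y := by
    rw [negY_eq]
    intro hc
    exact hy ((mul_eq_zero.mp (by linear_combination hc : 2 * y = 0)).resolve_left h2)
  have hX : (ofA₄ a).toAffine.addX x x ((ofA₄ a).toAffine.slope x x y y) = x' := by
    rw [slope_of_Y_ne rfl hne, negY_eq]
    simp only [addX, ofA₄, sub_neg_eq_add, ← two_mul]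
    field_simp
    linear_combination (-8 * x - 4 * x') * heq - hx'
  rw [Point.add_self_of_Y_ne hne]
  subst hX
  exact ⟨_, _, rfl⟩

variable {xs : ℕ → F} {K : ℕ}

theorem exists_two_pow_nsmul_eq_some (h2 : (2 : F) ≠ 0)
    (hdouble : ∀ i < K, 4 * (xs i ^ 3 + a * xs i) * xs (i + 1) = (xs i ^ 2 - a) ^ 2)
    (hden : ∀ i < K, xs i ^ 3 + a * xs i ≠ 0) (h : (ofA₄ a).toAffine.Nonsingular (xs 0) y) :
    ∀ i ≤ K, ∃ (yi : F) (hi : (ofA₄ a).toAffine.Nonsingular (xs i) yi),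
      2 ^ i • Point.some _ _ h = Point.some _ _ hi := by
  intro i
  induction i with
  | zero => exact fun _ => ⟨y, h, one_nsmul _⟩
  | succ i ih =>
    intro hi
    obtain ⟨yi, hyi, hQi⟩ := ih (by omega)
    have hyi0 : yi ≠ 0 := by
      rintro rfl
      exact hden i hi (by linear_combination -(equation_iff.mp hyi.1))
    obtain ⟨y', h', hdbl⟩ := exists_some_add_self h2 hyi hyi0 (hdouble i hi)
    exact ⟨y', h', by rw [pow_succ, mul_nsmul, two_nsmul, hQi, hdbl]⟩

theorem addOrderOf_some_eq_two_pow (h2 : (2 : F) ≠ 0)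
    (hdouble : ∀ i < K, 4 * (xs i ^ 3 + a * xs i) * xs (i + 1) = (xs i ^ 2 - a) ^ 2)
    (hden : ∀ i < K, xs i ^ 3 + a * xs i ≠ 0) (hlast : xs K ^ 3 + a * xs K = 0)
    (h : (ofA₄ a).toAffine.Nonsingular (xs 0) y) :
    addOrderOf (Point.some _ _ h) = 2 ^ (K + 1) := by
  obtain ⟨yK, hK, hQK⟩ := exists_two_pow_nsmul_eq_some h2 hdouble hden h K le_rfl
  have hyK : yK = 0 := pow_eq_zero_iff two_ne_zero |>.mp <| (equation_iff.mp hK.1).trans hlast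
  subst hyK
  refine addOrderOf_eq_prime_pow (by rw [hQK]; exact Point.some_ne_zero _) ?_
  rw [pow_succ, mul_nsmul, two_nsmul, hQK, some_add_self_of_Y_eq_zero]

end ofA₄

end WeierstrassCurve

open WeierstrassCurve in
theorem exists_addOrderOf_eq_two_pow_of_prime_dvd {k p r : ℕ} [Fact r.Prime] (hk : 1 ≤ k)
    (hr : r ≠ 2) (hrp : r ∣ p) (m : ℤ) (hm : Int.gcd m p = 1)
    (x y : ℤ) (hQ : (y : ZMod p) ^ 2 = (x : ZMod p) ^ 3 - (m : ZMod p) * (x : ZMod p))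
    (xs : ℕ → ℤ) (hx0 : xs 0 = x)
    (hrec : ∀ i, i + 1 ≤ k - 1 →
      ((4 * (xs i ^ 3 - m * xs i) * xs (i + 1) : ℤ) : ZMod p)
        = ((xs i ^ 4 + 2 * m * xs i ^ 2 + m ^ 2 : ℤ) : ZMod p))
    (hgcd : ∀ i, 1 ≤ i → i ≤ k - 1 →
      Int.gcd (4 * (xs (i - 1) ^ 3 - m * xs (i - 1))) p = 1)
    (hSk : ((4 * (xs (k - 1) ^ 3 - m * xs (k - 1)) : ℤ) : ZMod p) = 0) :
    ∃ Q : (ofA₄ (-(m : ZMod r))).toAffine.Point, addOrderOf Q = 2 ^ k := by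
  have hr1 : r ≠ 1 := (Fact.out : r.Prime).ne_one
  have h2 : (2 : ZMod r) ≠ 0 := Ring.two_ne_zero (by rwa [ZMod.ringChar_zmod_n])
  have h4 : (4 : ZMod r) ≠ 0 := by simpa [show (4 : ZMod r) = 2 * 2 by norm_num] using h2
  have hcast {a b : ℤ} (h : (a : ZMod p) = b) : (a : ZMod r) = b := by
    simpa using congrArg (ZMod.castHom hrp (ZMod r)) h
  have hQr : (y : ZMod r) ^ 2 = (xs 0 : ZMod r) ^ 3 + -(m : ZMod r) * (xs 0 : ZMod r) := by
    have := hcast (a := y ^ 2) (b := x ^ 3 - m * x) (by push_cast; exact hQ)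
    push_cast at this
    rw [hx0]; linear_combination this
  have hma : -(m : ZMod r) ≠ 0 := neg_ne_zero.mpr (ZMod.intCast_ne_zero_of_gcd_eq_one hr1 hrp hm)
  have hP := (ofA₄.nonsingular_iff h2 hma).mpr hQr
  have hdouble : ∀ i < k - 1, 4 * ((xs i : ZMod r) ^ 3 + -(m : ZMod r) * xs i) * xs (i + 1)
      = ((xs i : ZMod r) ^ 2 - -(m : ZMod r)) ^ 2 := fun i hi => by
    have := hcast (hrec i hi)
    push_cast at this
    linear_combination this
  have hden : ∀ i < k - 1, (xs i : ZMod r) ^ 3 + -(m : ZMod r) * xs i ≠ 0 := fun i hi h => by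
    have := ZMod.intCast_ne_zero_of_gcd_eq_one hr1 hrp (hgcd (i + 1) (by omega) (by omega))
    push_cast at this
    exact this (by linear_combination 4 * h)
  have hlast : (xs (k - 1) : ZMod r) ^ 3 + -(m : ZMod r) * xs (k - 1) = 0 := by
    have := hcast (b := 0) (by rw [hSk, Int.cast_zero])
    push_cast at this
    exact (mul_eq_zero.mp (by linear_combination this)).resolve_left h4
  have hord := ofA₄.addOrderOf_some_eq_two_pow (xs := fun i => (xs i : ZMod r)) h2 hdouble hden
    hlast hP
  exact ⟨_, by rwa [Nat.sub_add_cancel hk] at hord⟩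

theorem stmt_7_general (k n p : ℕ) (hk : 2 ≤ k) (hn : Odd n) (hp : p = 2 ^ k * n - 1)
    (lam : ℝ) (hlam : 1 < lam)
    (hsmall : (n : ℝ) ≤ Real.sqrt p / lam)
    (m : ℤ) (hm : Int.gcd m p = 1)
    (x y : ℤ) (hQ : ((y : ZMod p)) ^ 2 = (x : ZMod p) ^ 3 - (m : ZMod p) * (x : ZMod p))
    (xs : ℕ → ℤ) (hx0 : xs 0 = x)
    (hrec : ∀ i, i + 1 ≤ k - 1 →
      ((4 * (xs i ^ 3 - m * xs i) * xs (i + 1) : ℤ) : ZMod p)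
        = ((xs i ^ 4 + 2 * m * xs i ^ 2 + m ^ 2 : ℤ) : ZMod p))
    (hgcd : ∀ i, 1 ≤ i → i ≤ k - 1 →
      Int.gcd (4 * (xs (i - 1) ^ 3 - m * xs (i - 1))) p = 1)
    (hSk : ((4 * (xs (k - 1) ^ 3 - m * xs (k - 1)) : ℤ) : ZMod p) = 0) :
    p.Prime := by
  by_contra hcomp
  obtain ⟨c, hc⟩ : 4 ∣ 2 ^ k := pow_dvd_pow 2 hk
  have hp1 : p + 1 = 2 ^ k * n := by
    have := Nat.mul_pos (by positivity : 0 < 2 ^ k) hn.pos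
    omega
  have hp4 : p % 4 = 3 := by rw [hc, mul_assoc] at hp1; omega
  obtain ⟨r, hr, hrp, hr4⟩ := Nat.exists_prime_dvd_mod_four_eq_three hp4
  have := Fact.mk hr
  obtain ⟨Q, hQord⟩ := exists_addOrderOf_eq_two_pow_of_prime_dvd (by omega) (by omega) hrp m hm
    x y hQ xs hx0 hrec hgcd hSk
  have hdvd : 2 ^ k ∣ r + 1 := by
    have hcard := WeierstrassCurve.ofA₄.card_point (by rwa [Nat.card_zmod])
      (neg_ne_zero.mpr (ZMod.intCast_ne_zero_of_gcd_eq_one hr.ne_one hrp hm))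
    rw [Nat.card_zmod] at hcard
    exact hQord ▸ hcard ▸ addOrderOf_dvd_natCard Q
  obtain ⟨s, hs⟩ := hrp
  have hs2 : 2 ≤ s := by
    rcases s with _ | _ | s
    · omega
    · exact absurd (hs.trans (mul_one r) ▸ hr) hcomp
    · omega
  have hkn : 2 ^ k ≤ n := Nat.le_of_mul_add_one_eq_mul (hs ▸ hp1) hdvd hs2
  have hn_sqrt : (n : ℝ) ≤ √p := hsmall.trans (div_le_self (Real.sqrt_nonneg _) hlam.le)
  have hnp : n ^ 2 ≤ p := by
    exact_mod_cast (Real.le_sqrt (by positivity) (by positivity)).mp hn_sqrt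
  nlinarith

/-- **Primality test for `p = 2^k·n − 1` with `n` small.**
Let `p = 2^k·n − 1` with `k ≥ 2`, `n` odd, `n ≤ √p/λ` for some `λ > 1`, and
`λ√p > (p^{1/4} + 1)²`.  Suppose there are `m, x, y` with `gcd(m, p) = 1`,
`(x, y)` on `y² = x³ − m·x (mod p)`, and a sequence `xs` of `x`-coordinates of
the points `2^i·Q` (so `xs 0 = x` and the duplication formula
`x_{i+1} = (x_i⁴ + 2m x_i² + m²)/(4(x_i³ − m x_i))` holds mod `p`) such that the
denominators `S_i = 4(x_{i−1}³ − m x_{i−1})` satisfy `gcd(S_i, p) = 1` for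
`1 ≤ i ≤ k − 1` and `S_k ≡ 0 (mod p)` (i.e. `2^k·Q = ∞`).  Then `p` is prime. -/
theorem stmt_7 (k n p : ℕ) (hk : 2 ≤ k) (hn : Odd n) (hp : p = 2 ^ k * n - 1)
    (lam : ℝ) (hlam : 1 < lam)
    (hsmall : (n : ℝ) ≤ Real.sqrt p / lam)
    (hbig : lam * Real.sqrt p > ((p : ℝ) ^ ((1 : ℝ) / 4) + 1) ^ 2)
    (m : ℤ) (hm : Int.gcd m p = 1)
    (x y : ℤ) (hQ : ((y : ZMod p)) ^ 2 = (x : ZMod p) ^ 3 - (m : ZMod p) * (x : ZMod p))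
    (xs : ℕ → ℤ) (hx0 : xs 0 = x)
    (hrec : ∀ i, i + 1 ≤ k - 1 →
      ((4 * (xs i ^ 3 - m * xs i) * xs (i + 1) : ℤ) : ZMod p)
        = ((xs i ^ 4 + 2 * m * xs i ^ 2 + m ^ 2 : ℤ) : ZMod p))
    (hgcd : ∀ i, 1 ≤ i → i ≤ k - 1 →
      Int.gcd (4 * (xs (i - 1) ^ 3 - m * xs (i - 1))) p = 1)
    (hSk : ((4 * (xs (k - 1) ^ 3 - m * xs (k - 1)) : ℤ) : ZMod p) = 0) :
    p.Prime :=
  stmt_7_general k n p hk hn hp lam hlam hsmall m hm x y hQ xs hx0 hrec hgcd hSk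
end

section
/- Let p = 2^k·q − 1 be prime with k ≥ 2, q an odd prime, m a quadratic non-residue mod p, E: y² = x³ − mx over F_p, and Q ∈ E(F_p) a point with x-coordinate a quadratic non-residue such that 2^k·Q ≠ ∞. Then Q has order exactly 2^k·q, and in particular q·(2^k·Q) = ∞. -/
open scoped AddSubgroup

lemma Nat.dvd_pow_mul_of_not_pow_succ_dvd {ℓ n k r : ℕ} (hℓ : ℓ.Prime)
    (hn : n ∣ ℓ ^ (k + 1) * r) (h : ¬ ℓ ^ (k + 1) ∣ n) : n ∣ ℓ ^ k * r := by
  obtain ⟨c, d, hc, hd, rfl⟩ := exists_dvd_and_dvd_of_dvd_mul hn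
  obtain ⟨i, -, rfl⟩ := (Nat.dvd_prime_pow hℓ).mp hc
  have hi : i ≤ k := by
    by_contra hi
    exact h (Dvd.dvd.mul_right (pow_dvd_pow ℓ (by omega)) d)
  exact mul_dvd_mul (pow_dvd_pow ℓ hi) hd

namespace AddSubgroup

variable {G : Type*} [AddCommGroup G]

lemma ker_zsmulAddGroupHom (n : ℤ) : (zsmulAddGroupHom n : G →+ G).ker = G[n] := by
  ext; simp

lemma card_range_zsmul_mul_card_torsionBy (n : ℤ) :
    Nat.card (zsmulAddGroupHom n : G →+ G).range * Nat.card G[n] = Nat.card G := by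
  rw [← ker_zsmulAddGroupHom, ← index_ker, mul_comm, card_mul_index]

lemma mem_torsionBy_two_iff {g : G} : g ∈ G[2] ↔ 2 • g = 0 := by
  simp [two_zsmul, two_nsmul]

variable [Finite G]

lemma card_torsionBy_mul_le (a b : ℤ) :
    Nat.card G[a * b] ≤ Nat.card G[a] * Nat.card G[b] := by
  have hmap : G[a * b].map (zsmulAddGroupHom a) ≤ G[b] := by
    rintro _ ⟨g, hg, rfl⟩
    simpa [smul_smul, mul_comm b a] using hg
  calc Nat.card G[a * b]
      = Nat.card ↥(G[a] ⊓ G[a * b]) * Nat.card (G[a * b].map (zsmulAddGroupHom a)) := by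
        rw [← relIndex_ker, ker_zsmulAddGroupHom, ← relIndex_bot_left, ← relIndex_bot_left,
          relIndex_inf_mul_relIndex, bot_inf_eq]
    _ ≤ Nat.card G[a] * Nat.card G[b] :=
        Nat.mul_le_mul (card_le_of_le inf_le_left) (card_le_of_le hmap)

lemma card_torsionBy_two_pow_le (h2 : Nat.card G[2] ≤ 2) (i : ℕ) :
    Nat.card G[2 ^ i] ≤ 2 ^ i := by
  induction i with
  | zero => simp
  | succ i ih =>
    calc Nat.card G[2 ^ (i + 1)] ≤ Nat.card G[2 ^ i] * Nat.card G[2] := by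
          rw [pow_succ]; exact card_torsionBy_mul_le _ _
      _ ≤ 2 ^ (i + 1) := by rw [pow_succ]; exact Nat.mul_le_mul ih h2

lemma card_torsionBy_dvd_of_coprime {n r : ℕ} (hcop : n.Coprime r)
    (hcard : Nat.card G = n * r) : Nat.card G[r] ∣ r := by
  have hdvd : Nat.card G[r] ∣ n * r := hcard ▸ card_addSubgroup_dvd_card _
  refine Nat.Coprime.dvd_of_dvd_mul_left ?_ hdvd
  refine Nat.coprime_of_dvd fun ℓ hℓ hℓG hℓn => ?_
  have := Fact.mk hℓ
  obtain ⟨g, hg⟩ := exists_prime_addOrderOf_dvd_card' ℓ hℓG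
  have hℓr : ℓ ∣ r := hg ▸ addOrderOf_dvd_of_nsmul_eq_zero (torsionBy.nsmul g)
  exact hℓ.one_lt.ne' (Nat.eq_one_of_dvd_coprimes hcop hℓn hℓr)

lemma exists_two_nsmul_eq_of_card_torsionBy_two_le (h2 : Nat.card G[2] ≤ 2) {k r : ℕ}
    (hr : Odd r) (hcard : Nat.card G = 2 ^ (k + 1) * r) {g : G} (hg : (2 ^ k * r) • g = 0) :
    ∃ h, 2 • h = g := by
  set D := (zsmulAddGroupHom 2 : G →+ G).range
  have hD : D ≤ G[2 ^ k * r] := by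
    rintro _ ⟨h, rfl⟩
    have : ((2 ^ (k + 1) * r : ℕ) : ℤ) • h = 0 := by
      rw [natCast_zsmul, ← hcard]; exact card_nsmul_eq_zero'
    simpa [smul_smul, pow_succ, mul_assoc, mul_comm, mul_left_comm] using this
  have hcop : (2 ^ (k + 1)).Coprime r := Nat.Coprime.pow_left _ (Nat.coprime_two_left.mpr hr)
  have hupper : Nat.card G[2 ^ k * r] ≤ 2 ^ k * r :=
    calc Nat.card G[2 ^ k * r] ≤ Nat.card G[2 ^ k] * Nat.card G[r] := card_torsionBy_mul_le _ _
      _ ≤ 2 ^ k * r := Nat.mul_le_mul (card_torsionBy_two_pow_le h2 k)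
          (Nat.le_of_dvd hr.pos (card_torsionBy_dvd_of_coprime hcop hcard))
  have hlower : 2 ^ k * r ≤ Nat.card D := by
    have := card_range_zsmul_mul_card_torsionBy (G := G) 2
    rw [hcard, pow_succ] at this
    nlinarith
  have hg' : g ∈ D := by
    rw [eq_of_le_of_card_ge hD (hupper.trans hlower)]
    rw [← natCast_zsmul] at hg
    simpa using hg
  obtain ⟨h, rfl⟩ := hg'
  exact ⟨h, by simp [two_zsmul, two_nsmul]⟩

end AddSubgroup

open Finset in
lemma FiniteField.natCard_sq_eq_of_odd {F : Type*} [Field F] [Fintype F] (hF : ringChar F ≠ 2)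
    (hneg : ¬ IsSquare (-1 : F)) {f : F → F} (hf : f.Odd) :
    Nat.card {P : F × F // P.2 ^ 2 = f P.1} = Fintype.card F := by
  classical
  set χ := quadraticChar F
  have hχf : (fun x => χ (f x)).Odd := fun x => by
    dsimp only
    rw [hf x, neg_eq_neg_one_mul, map_mul, quadraticChar_neg_one_iff_not_isSquare.mpr hneg,
      neg_one_mul]
  have hfiber (a : F) : (Fintype.card {y : F // y ^ 2 = a} : ℤ) = χ a + 1 := by
    rw [← quadraticChar_card_sqrts hF a, Set.toFinset_card]
    rfl
  have : (Nat.card {P : F × F // P.2 ^ 2 = f P.1} : ℤ) = Fintype.card F := by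
    rw [Nat.card_congr (Equiv.subtypeProdEquivSigmaSubtype fun x y => y ^ 2 = f x),
      Nat.card_eq_fintype_card, Fintype.card_sigma]
    push_cast
    simp_rw [hfiber, sum_add_distrib, hχf.sum_eq_zero]
    simp
  exact_mod_cast this

open WeierstrassCurve.Affine

instance {F : Type*} [Field F] [Finite F] (W : WeierstrassCurve.Affine F) : Finite W.Point :=
  have : Finite (WithZero {xy : F × F // W.Nonsingular xy.1 xy.2}) :=
    inferInstanceAs (Finite (Option _))
  .of_equiv _ W.nonsingularPointEquiv.symm

section Emx

variable {p : ℕ} [Fact p.Prime] {m : ℤ}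

lemma emx_equation_iff {x y : ZMod p} :
    (Emx p m).Equation x y ↔ y ^ 2 = x ^ 3 - m * x := by
  rw [equation_iff]
  simp only [Emx]
  constructor <;> intro h <;> linear_combination h

lemma emx_negY (x y : ZMod p) : (Emx p m).negY x y = -y := by
  simp [Emx, negY]

lemma ZMod.two_ne_zero_of_ne_two (hp2 : p ≠ 2) : (2 : ZMod p) ≠ 0 :=
  Ring.two_ne_zero (by rwa [ZMod.ringChar_zmod_n])

lemma emx_nonsingular_iff (hp2 : p ≠ 2) (hm0 : (m : ZMod p) ≠ 0) {x y : ZMod p} :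
    (Emx p m).Nonsingular x y ↔ y ^ 2 = x ^ 3 - m * x := by
  have hΔ : (Emx p m).Δ = 2 ^ 6 * (m : ZMod p) ^ 3 := by
    simp only [WeierstrassCurve.Δ, WeierstrassCurve.b₂, WeierstrassCurve.b₄,
      WeierstrassCurve.b₆, WeierstrassCurve.b₈, Emx]
    ring
  have hΔ0 : (Emx p m).Δ ≠ 0 := by
    rw [hΔ]
    exact mul_ne_zero (pow_ne_zero _ (ZMod.two_ne_zero_of_ne_two hp2)) (pow_ne_zero _ hm0)
  rw [← equation_iff_nonsingular_of_Δ_ne_zero hΔ0, emx_equation_iff]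

lemma natCard_emx_point (hp : p % 4 = 3) (hm0 : (m : ZMod p) ≠ 0) :
    Nat.card (Emx p m).Point = p + 1 := by
  have hp2 : p ≠ 2 := by omega
  rw [Nat.card_congr (Emx p m).nonsingularPointEquiv, WithZero, Finite.card_option,
    Nat.card_congr (Equiv.subtypeEquivRight fun P => emx_nonsingular_iff hp2 hm0),
    FiniteField.natCard_sq_eq_of_odd (f := fun x : ZMod p => x ^ 3 - m * x)
      (by rwa [ZMod.ringChar_zmod_n]), ZMod.card]
  · rw [ZMod.exists_sq_eq_neg_one_iff]
    omega
  · intro x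
    ring

lemma emx_eq_origin_of_two_nsmul_eq_zero (hp2 : p ≠ 2) (hm : ¬ IsSquare (m : ZMod p))
    {x y : ZMod p} {h : (Emx p m).Nonsingular x y} (h2 : 2 • Point.some x y h = 0) :
    x = 0 ∧ y = 0 := by
  have hy : y = (Emx p m).negY x y := by
    by_contra hy
    rw [two_nsmul, Point.add_self_of_Y_ne hy] at h2
    exact Point.some_ne_zero _ h2
  have hy0 : y = 0 := by
    rw [emx_negY, eq_neg_iff_add_eq_zero, ← two_mul] at hy
    exact (mul_eq_zero.mp hy).resolve_left (ZMod.two_ne_zero_of_ne_two hp2)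
  have hcurve := emx_equation_iff.mp h.1
  rw [hy0] at hcurve
  refine ⟨?_, hy0⟩
  have : x * (x ^ 2 - m) = 0 := by linear_combination -hcurve
  exact (mul_eq_zero.mp this).resolve_right fun hx => hm ⟨x, by linear_combination -hx⟩

lemma card_torsionBy_two_emx_le (hp2 : p ≠ 2) (hm : ¬ IsSquare (m : ZMod p)) :
    Nat.card (Emx p m).Point[2] ≤ 2 := by
  classical
  have hinj :
      Function.Injective fun P : (Emx p m).Point[2] => decide ((P : (Emx p m).Point) = 0) := by
    rintro ⟨_ | @⟨x, y, h⟩, hP⟩ ⟨_ | @⟨x', y', h'⟩, hP'⟩ heq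
    · rfl
    · simp [← Point.zero_def] at heq
    · simp [← Point.zero_def] at heq
    · rw [AddSubgroup.mem_torsionBy_two_iff] at hP hP'
      obtain ⟨rfl, rfl⟩ := emx_eq_origin_of_two_nsmul_eq_zero hp2 hm hP
      obtain ⟨rfl, rfl⟩ := emx_eq_origin_of_two_nsmul_eq_zero hp2 hm hP'
      rfl
  simpa using Nat.card_le_card_of_injective _ hinj

lemma emx_isSquare_x_of_two_nsmul_eq_some {x y : ZMod p} {h : (Emx p m).Nonsingular x y}
    {R : (Emx p m).Point} (hR : 2 • R = Point.some x y h) : IsSquare x := by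
  rcases R with _ | @⟨x', y', h'⟩
  · exact absurd hR.symm (Point.some_ne_zero h)
  by_cases hy : y' = (Emx p m).negY x' y'
  · rw [two_nsmul, Point.add_self_of_Y_eq hy] at hR
    exact absurd hR.symm (Point.some_ne_zero h)
  rw [two_nsmul, Point.add_self_of_Y_ne hy, Point.some.injEq] at hR
  have h2y : (2 : ZMod p) * y' ≠ 0 := fun h0 => hy (by rw [emx_negY]; linear_combination h0)
  have hslope : (Emx p m).slope x' x' y' y' = (3 * x' ^ 2 - m) / (2 * y') := by
    rw [slope_of_Y_ne rfl hy, emx_negY]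
    simp only [Emx]
    ring
  have h2 : (2 : ZMod p) ≠ 0 := left_ne_zero_of_mul h2y
  have hy0 : y' ≠ 0 := right_ne_zero_of_mul h2y
  have hcurve := emx_equation_iff.mp h'.1
  refine ⟨(x' ^ 2 + m) / (2 * y'), ?_⟩
  rw [← hR.1, hslope]
  simp only [addX, Emx]
  field_simp
  linear_combination (-8 * x') * hcurve

end Emx

theorem stmt_15_general (k q p : ℕ) (hk : 2 ≤ k) (hq : q.Prime) (hqodd : Odd q)
    (hp : p = 2 ^ k * q - 1) [Fact p.Prime]
    (m : ℤ) (hm : ¬ IsSquare (m : ZMod p))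
    (x y : ZMod p) (h : (Emx p m).Nonsingular x y) (hx : ¬ IsSquare x)
    (h2k : 2 ^ k • (WeierstrassCurve.Affine.Point.some x y h) ≠ 0) :
    addOrderOf (WeierstrassCurve.Affine.Point.some x y h) = 2 ^ k * q ∧
    q • (2 ^ k • WeierstrassCurve.Affine.Point.some x y h) = 0 := by
  obtain ⟨j, rfl⟩ : ∃ j, k = j + 1 := ⟨k - 1, by omega⟩
  have h4 : 4 ∣ 2 ^ (j + 1) * q := (pow_dvd_pow 2 hk).mul_right q
  have hp4 : p % 4 = 3 := by have := (Fact.out : p.Prime).two_le; omega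
  have hcard : Nat.card (Emx p m).Point = 2 ^ (j + 1) * q := by
    rw [natCard_emx_point hp4 fun h0 => hm (h0 ▸ .zero)]
    omega
  set Q := Point.some x y h
  have hdvd : addOrderOf Q ∣ 2 ^ (j + 1) * q := hcard ▸ addOrderOf_dvd_natCard Q
  have hq_dvd : q ∣ addOrderOf Q := by
    by_contra hq'
    have hcop := (hq.coprime_iff_not_dvd.mpr hq').symm
    exact h2k (addOrderOf_dvd_iff_nsmul_eq_zero.mp (hcop.dvd_of_dvd_mul_right hdvd))
  have h2_dvd : 2 ^ (j + 1) ∣ addOrderOf Q := by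
    by_contra h2'
    obtain ⟨R, hR⟩ := AddSubgroup.exists_two_nsmul_eq_of_card_torsionBy_two_le
      (card_torsionBy_two_emx_le (by omega) hm) hqodd hcard
      (addOrderOf_dvd_iff_nsmul_eq_zero.mp
        (Nat.dvd_pow_mul_of_not_pow_succ_dvd Nat.prime_two hdvd h2'))
    exact hx (emx_isSquare_x_of_two_nsmul_eq_some hR)
  have hcop : (2 ^ (j + 1)).Coprime q := .pow_left _ (Nat.coprime_two_left.mpr hqodd)
  have horder : addOrderOf Q = 2 ^ (j + 1) * q :=
    Nat.dvd_antisymm hdvd (hcop.mul_dvd_of_dvd_of_dvd h2_dvd hq_dvd)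
  refine ⟨horder, ?_⟩
  rw [← mul_nsmul, ← horder]
  exact addOrderOf_nsmul_eq_zero Q

/-- Let `p = 2^k·q − 1` be prime with `k ≥ 2`, `q` an odd prime, `m` a quadratic
non-residue mod `p`, and `Q ∈ E(F_p)` an affine point with `x`-coordinate a
quadratic non-residue such that `2^k·Q ≠ ∞`.  Then `Q` has order exactly `2^k·q`,
and in particular `q·(2^k·Q) = ∞`. -/
theorem stmt_15 (k q p : ℕ) (hk : 2 ≤ k) (hq : q.Prime) (hqodd : Odd q)
    (hp : p = 2 ^ k * q - 1) [Fact p.Prime]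
    (m : ℤ) (hm0 : (m : ZMod p) ≠ 0) (hm : ¬ IsSquare (m : ZMod p))
    (x y : ZMod p) (h : (Emx p m).Nonsingular x y) (hx : ¬ IsSquare x)
    (h2k : 2 ^ k • (WeierstrassCurve.Affine.Point.some x y h) ≠ 0) :
    addOrderOf (WeierstrassCurve.Affine.Point.some x y h) = 2 ^ k * q ∧
    q • (2 ^ k • WeierstrassCurve.Affine.Point.some x y h) = 0 :=
  stmt_15_general k q p hk hq hqodd hp m hm x y h hx h2k
end
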